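/- Robust min-of-medians: let y₁,…,y_R lie in a metric space with x* such that |S| > (3/4)R where S = {i : d(yᵢ,x*)² ≤ ε}. Suppose d'_{i,j} are approximate squared distances with α·d(yᵢ,yⱼ)² ≤ d'_{i,j} ≤ β·d(yᵢ,yⱼ)² for 0 < α ≤ β. Let j* = argmin_j median_i d'_{j,i}. Then d(y_{j*}, x*)² ≤ (1 + 2√(2β/α))²·ε; in particular d(y_{j*},x*)² ≤ C·(β/α)·ε for an absolute constant C. -/

import Mathlib

/-!
More than three quarters of the points `y i` are good, i.e. within `√ε` of `x*`. The row of
a good point `j₀` is at most `β (2√ε)² = 4βε` on every good index, a majority, so its median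
is at most `4βε`, and by minimality so is the median of row `j*`. The `⌈R/2⌉` indices on
which row `j*` is at most its median must meet the good set; for such an `i`,
`α d(y j*, y i)² ≤ 4βε`, and the triangle inequality through `y i` concludes.
-/

/-- The median of a finite list of reals: its `⌈n/2⌉`-th smallest element. -/
noncomputable def medianList (l : List ℝ) : ℝ :=
  (List.insertionSort (· ≤ ·) l).getD ((l.length + 1) / 2 - 1) 0

namespace List

variable {α : Type*}

theorem Pairwise.lt_countP_le_iff [LinearOrder α] {s : List α} (hs : s.Pairwise (· ≤ ·))
    {k : ℕ} (hk : k < s.length) (c : α) : k < s.countP (· ≤ c) ↔ s[k] ≤ c := by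
  have mono : ∀ i j (hi : i < s.length) (hj : j < s.length), i ≤ j → s[i] ≤ s[j] :=
    fun i j hi hj hij => hs.rel_get_of_le (a := ⟨i, hi⟩) (b := ⟨j, hj⟩) hij
  constructor
  · intro hcount
    by_contra! hkc
    have hdrop : (s.drop k).countP (· ≤ c) = 0 := by
      refine countP_eq_zero.2 fun x hx => ?_
      obtain ⟨j, hj, rfl⟩ := mem_iff_getElem.1 hx
      rw [length_drop] at hj
      rw [getElem_drop, decide_eq_true_iff, not_le]
      exact hkc.trans_le (mono _ _ _ _ (Nat.le_add_right k j))
    have htake := countP_le_length (p := (· ≤ c)) (l := s.take k)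
    rw [← take_append_drop k s, countP_append, hdrop] at hcount
    simp only [length_take] at htake
    omega
  · intro hkc
    have htake : (s.take (k + 1)).countP (· ≤ c) = k + 1 := by
      rw [countP_eq_length.2, length_take]
      · omega
      intro x hx
      obtain ⟨j, hj, rfl⟩ := mem_iff_getElem.1 hx
      rw [length_take] at hj
      rw [getElem_take, decide_eq_true_iff]
      exact (mono _ _ _ _ (by omega)).trans hkc
    have hsub := (take_sublist (k + 1) s).countP_le (p := (· ≤ c))
    omega

theorem countP_ofFn {n : ℕ} (f : Fin n → α) (p : α → Prop) [DecidablePred p] :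
    (ofFn f).countP (p ·) = (Finset.univ.filter fun i => p (f i)).card := by
  rw [← Multiset.coe_countP, ← Fin.univ_val_map, Multiset.countP_map]
  rfl

end List

theorem medianList_le_iff {l : List ℝ} (hl : l ≠ []) (c : ℝ) :
    medianList l ≤ c ↔ (l.length + 1) / 2 ≤ l.countP (· ≤ c) := by
  have hperm := List.perm_insertionSort (· ≤ ·) l
  have hlen : 0 < l.length := List.length_pos_iff.2 hl
  have hk : (l.length + 1) / 2 - 1 < (l.insertionSort (· ≤ ·)).length := by
    rw [hperm.length_eq]; omega
  rw [medianList, List.getD_eq_getElem _ _ hk,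
    ← (List.pairwise_insertionSort (· ≤ ·) l).lt_countP_le_iff hk, hperm.countP_eq]
  omega

theorem medianList_ofFn_le_iff {n : ℕ} (hn : 0 < n) (f : Fin n → ℝ) (c : ℝ) :
    medianList (List.ofFn f) ≤ c ↔ (n + 1) / 2 ≤ (Finset.univ.filter fun i => f i ≤ c).card := by
  rw [medianList_le_iff (by simpa using hn.ne'), List.countP_ofFn, List.length_ofFn]

theorem dist_sq_le_of_dist_sq_le_mul {M : Type*} [PseudoMetricSpace M] {a b c : M} {K ε : ℝ}
    (hK : 0 ≤ K) (hab : dist a b ^ 2 ≤ K ^ 2 * ε) (hbc : dist b c ^ 2 ≤ ε) :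
    dist a c ^ 2 ≤ (K + 1) ^ 2 * ε := by
  have hε : 0 ≤ ε := (sq_nonneg _).trans hbc
  have hsq {r L : ℝ} (hr : 0 ≤ r) (hL : 0 ≤ L) : r ^ 2 ≤ L ^ 2 * ε ↔ r ≤ L * √ε := by
    rw [show L ^ 2 * ε = (L * √ε) ^ 2 by rw [mul_pow, Real.sq_sqrt hε]]
    exact pow_le_pow_iff_left₀ hr (by positivity) two_ne_zero
  rw [hsq dist_nonneg (by positivity)]
  have hab' := (hsq dist_nonneg hK).1 hab
  have hbc' := (hsq (L := 1) dist_nonneg zero_le_one).1 (by rwa [one_pow, one_mul])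
  linarith [dist_triangle a b c]

theorem robust_min_of_medians_general {M : Type*} [MetricSpace M]
    (R : ℕ) (y : Fin R → M) (xstar : M) (ε : ℝ)
    (α β : ℝ) (hα : 0 < α) (hαβ : α ≤ β)
    (hS : (3 : ℝ) / 4 * R <
      ((Finset.univ.filter (fun i => dist (y i) xstar ^ 2 ≤ ε)).card : ℝ))
    (d' : Fin R → Fin R → ℝ)
    (hd' : ∀ i j, α * dist (y i) (y j) ^ 2 ≤ d' i j ∧ d' i j ≤ β * dist (y i) (y j) ^ 2)
    (jstar : Fin R)
    (hjstar : ∀ j, medianList (List.ofFn (fun i => d' jstar i))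
        ≤ medianList (List.ofFn (fun i => d' j i))) :
    dist (y jstar) xstar ^ 2 ≤ (1 + 2 * Real.sqrt (2 * β / α)) ^ 2 * ε := by
  set S := Finset.univ.filter (fun i => dist (y i) xstar ^ 2 ≤ ε)
  set m := medianList (List.ofFn (fun i => d' jstar i))
  have hR : 0 < R := jstar.pos
  have hSR : 3 * R < 4 * S.card := by exact_mod_cast (by linarith : (3 * R : ℝ) < 4 * S.card)
  obtain ⟨j₀, hj₀⟩ : S.Nonempty := Finset.card_pos.1 (by omega)
  have hε : 0 ≤ ε := (sq_nonneg _).trans (Finset.mem_filter.1 hj₀).2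
  have hβ : 0 ≤ β := hα.le.trans hαβ
  have hm : m ≤ 4 * β * ε := by
    refine (hjstar j₀).trans ((medianList_ofFn_le_iff hR _ _).2 ?_)
    refine (by omega : (R + 1) / 2 ≤ S.card).trans (Finset.card_le_card fun i hi => ?_)
    have hj₀i : dist (y j₀) (y i) ^ 2 ≤ (1 + 1) ^ 2 * ε :=
      dist_sq_le_of_dist_sq_le_mul zero_le_one (by simpa using (Finset.mem_filter.1 hj₀).2)
        (by simpa [dist_comm] using (Finset.mem_filter.1 hi).2)
    rw [Finset.mem_filter]
    exact ⟨Finset.mem_univ _, by nlinarith [(hd' j₀ i).2]⟩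
  obtain ⟨i, hi⟩ := Finset.inter_nonempty_of_card_lt_card_add_card
    (Finset.subset_univ (Finset.univ.filter fun i => d' jstar i ≤ m)) (Finset.subset_univ S)
    (by
      have hmajority := (medianList_ofFn_le_iff hR (fun i => d' jstar i) m).1 le_rfl
      rw [Finset.card_univ, Fintype.card_fin]
      omega)
  obtain ⟨hiA, hiS⟩ := Finset.mem_inter.1 hi
  have hclose : dist (y jstar) (y i) ^ 2 ≤ (2 * √(2 * β / α)) ^ 2 * ε := by
    rw [mul_pow, Real.sq_sqrt (by positivity),
      show 2 ^ 2 * (2 * β / α) * ε = 8 * β * ε / α by ring, le_div_iff₀ hα]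
    nlinarith [(hd' jstar i).1, (Finset.mem_filter.1 hiA).2, mul_nonneg hβ hε]
  simpa [add_comm] using
    dist_sq_le_of_dist_sq_le_mul (by positivity) hclose (Finset.mem_filter.1 hiS).2

theorem robust_min_of_medians {M : Type*} [MetricSpace M]
    (R : ℕ) (hR : 0 < R) (y : Fin R → M) (xstar : M) (ε : ℝ) (hε : 0 ≤ ε)
    (α β : ℝ) (hα : 0 < α) (hαβ : α ≤ β)
    (hS : (3 : ℝ) / 4 * R <
      ((Finset.univ.filter (fun i => dist (y i) xstar ^ 2 ≤ ε)).card : ℝ))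
    (d' : Fin R → Fin R → ℝ)
    (hd' : ∀ i j, α * dist (y i) (y j) ^ 2 ≤ d' i j ∧ d' i j ≤ β * dist (y i) (y j) ^ 2)
    (jstar : Fin R)
    (hjstar : ∀ j, medianList (List.ofFn (fun i => d' jstar i))
        ≤ medianList (List.ofFn (fun i => d' j i))) :
    dist (y jstar) xstar ^ 2 ≤ (1 + 2 * Real.sqrt (2 * β / α)) ^ 2 * ε :=
  robust_min_of_medians_general R y xstar ε α β hα hαβ hS d' hd' jstar hjstar
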